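/- arXiv:2405.06585 — 7 statements merged into one kernel-verified Lean document; each statement's English description precedes it below -/
import Mathlib

section
/- The fixed point (π, π) of F is locally asymptotically attracting: there exists δ > 0 such that for every point X ∈ ℝ² with ‖X − (π,π)‖ < δ, the sequence of iterates Fⁿ(X) converges to (π, π) as n → ∞. -/
noncomputable def F (a : ℝ) : ℝ × ℝ → ℝ × ℝ :=
  fun p => (p.1 + 2 * a * Real.sin p.1 + a * Real.sin p.2,
            p.2 + a * Real.sin p.1 + 2 * a * Real.sin p.2)

open Real

lemma key_est (a u : ℝ) (ha : 0 < a) (ha' : a < 1/6) (hu : |u| ≤ π/2) :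
    |u - 2*a*Real.sin u| ≤ (1 - 4*a/π) * |u| := by
  have hπ := Real.pi_pos
  have hfac0 : (0:ℝ) ≤ 1 - 4*a/π := by
    have h3 : (3:ℝ) ≤ π := Real.pi_gt_three.le
    have : 4*a/π ≤ 4*a/3 := div_le_div_of_nonneg_left (by positivity) (by norm_num) h3
    nlinarith
  rcases abs_le.1 hu with ⟨h1, h2⟩
  rcases le_or_gt 0 u with h | h
  · have hs1 : Real.sin u ≤ u := Real.sin_le h
    have hs2 : 2/π * u ≤ Real.sin u := Real.mul_le_sin h h2
    have hs0 : 0 ≤ Real.sin u := Real.sin_nonneg_of_nonneg_of_le_pi h (by linarith)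
    rw [abs_of_nonneg h, abs_le]
    constructor
    · nlinarith [mul_le_mul_of_nonneg_left hs1 (by positivity : (0:ℝ) ≤ 2*a)]
    · have h2a : 2*a*(2/π*u) ≤ 2*a*Real.sin u :=
        mul_le_mul_of_nonneg_left hs2 (by positivity)
      have : 2*a*(2/π*u) = 4*a/π*u := by ring
      nlinarith
  · have h' : 0 ≤ -u := by linarith
    have hs1 : Real.sin (-u) ≤ -u := Real.sin_le h'
    have hs2 : 2/π * (-u) ≤ Real.sin (-u) := Real.mul_le_sin h' (by linarith)
    have hs0 : 0 ≤ Real.sin (-u) := Real.sin_nonneg_of_nonneg_of_le_pi h' (by linarith)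
    rw [Real.sin_neg] at hs1 hs2 hs0
    rw [abs_of_nonpos h.le, abs_le]
    constructor
    · have h2a : 2*a*(2/π*(-u)) ≤ 2*a*(-Real.sin u) :=
        mul_le_mul_of_nonneg_left hs2 (by positivity)
      have : 2*a*(2/π*(-u)) = 4*a/π*(-u) := by ring
      nlinarith
    · nlinarith [mul_le_mul_of_nonneg_left hs1 (by positivity : (0:ℝ) ≤ 2*a)]

theorem stmt_6 (a : ℝ) (ha : 0 < a) (ha' : a < 1/6) :
    ∃ δ > 0, ∀ X : ℝ × ℝ, ‖X - (Real.pi, Real.pi)‖ < δ →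
      Filter.Tendsto (fun n => (F a)^[n] X) Filter.atTop
        (nhds (Real.pi, Real.pi)) := by
  have hπ := Real.pi_pos
  have hπ4 : π < 4 := by linarith [Real.pi_lt_d2]
  set c : ℝ := 1 + a - 4*a/π with hc
  have hc1 : c < 1 := by
    have : a < 4*a/π := by
      rw [lt_div_iff₀ hπ]; nlinarith
    simp only [hc]; linarith
  have hc0 : 0 ≤ c := by
    have h3 : (3:ℝ) < π := Real.pi_gt_three
    have : 4*a/π ≤ 4*a/3 :=
      div_le_div_of_nonneg_left (by positivity) (by norm_num) h3.le
    simp only [hc]; nlinarith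
  set P : ℝ × ℝ := (π, π) with hP
  have hsin : ∀ x : ℝ, Real.sin x = - Real.sin (x - π) := by
    intro x
    have : Real.sin ((x - π) + π) = - Real.sin (x - π) := by
      rw [Real.sin_add]; simp
    simpa using this
  have hstep : ∀ X : ℝ × ℝ, ‖X - P‖ ≤ π/2 → ‖F a X - P‖ ≤ c * ‖X - P‖ := by
    intro X hX
    obtain ⟨x, y⟩ := X
    set u := x - π with hu
    set v := y - π with hv
    have hnorm : ‖((x, y) : ℝ × ℝ) - P‖ = max |u| |v| := by
      simp [hP, Prod.norm_def, Real.norm_eq_abs, Prod.sub_def, hu, hv]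
    have hub : |u| ≤ π/2 := le_trans (le_max_left _ _) (hnorm ▸ hX)
    have hvb : |v| ≤ π/2 := le_trans (le_max_right _ _) (hnorm ▸ hX)
    have hsx : Real.sin x = - Real.sin u := hsin x
    have hsy : Real.sin y = - Real.sin v := hsin y
    have hFnorm : ‖F a (x, y) - P‖
        = max |u - 2*a*Real.sin u - a*Real.sin v| |v - a*Real.sin u - 2*a*Real.sin v| := by
      have e1 : x + 2 * a * Real.sin x + a * Real.sin y - π
          = u - 2*a*Real.sin u - a*Real.sin v := by
        rw [hsx, hsy, hu, hv]; ring
      have e2 : y + a * Real.sin x + 2 * a * Real.sin y - π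
          = v - a*Real.sin u - 2*a*Real.sin v := by
        rw [hsx, hsy, hu, hv]; ring
      simp only [F, hP, Prod.norm_def, Prod.sub_def, Real.norm_eq_abs]
      rw [e1, e2]
    rw [hFnorm, hnorm]
    have k1 := key_est a u ha ha' hub
    have k2 := key_est a v ha ha' hvb
    have hm0 : (0:ℝ) ≤ max |u| |v| := le_trans (abs_nonneg u) (le_max_left _ _)
    have hum : |u| ≤ max |u| |v| := le_max_left _ _
    have hvm : |v| ≤ max |u| |v| := le_max_right _ _
    have hsu : |Real.sin u| ≤ |u| := Real.abs_sin_le_abs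
    have hsv : |Real.sin v| ≤ |v| := Real.abs_sin_le_abs
    have hfac : (0:ℝ) ≤ 1 - 4*a/π := by
      have : 4*a/π ≤ 4*a/3 :=
        div_le_div_of_nonneg_left (by positivity) (by norm_num) Real.pi_gt_three.le
      nlinarith
    have e1 : |u - 2*a*Real.sin u - a*Real.sin v| ≤ c * max |u| |v| := by
      calc |u - 2*a*Real.sin u - a*Real.sin v|
          ≤ |u - 2*a*Real.sin u| + |a*Real.sin v| := abs_sub _ _
        _ = |u - 2*a*Real.sin u| + a * |Real.sin v| := by
            rw [abs_mul, abs_of_pos ha]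
        _ ≤ (1 - 4*a/π) * max |u| |v| + a * max |u| |v| := by
            gcongr
            · exact k1.trans (by gcongr)
            · exact hsv.trans hvm
        _ = c * max |u| |v| := by rw [hc]; ring
    have e2 : |v - a*Real.sin u - 2*a*Real.sin v| ≤ c * max |u| |v| := by
      calc |v - a*Real.sin u - 2*a*Real.sin v|
          ≤ |v - 2*a*Real.sin v| + |a*Real.sin u| := by
            have : v - a*Real.sin u - 2*a*Real.sin v
                = (v - 2*a*Real.sin v) - a*Real.sin u := by ring
            rw [this]; exact abs_sub _ _
        _ = |v - 2*a*Real.sin v| + a * |Real.sin u| := by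
            rw [abs_mul, abs_of_pos ha]
        _ ≤ (1 - 4*a/π) * max |u| |v| + a * max |u| |v| := by
            gcongr
            · exact k2.trans (by gcongr)
            · exact hsu.trans hum
        _ = c * max |u| |v| := by rw [hc]; ring
    exact max_le e1 e2
  -- iterate bound
  refine ⟨π/2, by positivity, fun X hX => ?_⟩
  have hbound : ∀ n : ℕ, ‖(F a)^[n] X - P‖ ≤ c ^ n * ‖X - P‖ := by
    intro n
    induction n with
    | zero => simp
    | succ n ih =>
      have hin : ‖(F a)^[n] X - P‖ ≤ π/2 := by
        have hcn : c ^ n ≤ 1 := pow_le_one₀ hc0 hc1.le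
        have : c ^ n * ‖X - P‖ ≤ ‖X - P‖ := by
          nlinarith [norm_nonneg (X - P)]
        linarith [ih, hX.le]
      calc ‖(F a)^[n+1] X - P‖ = ‖F a ((F a)^[n] X) - P‖ := by
            rw [Function.iterate_succ_apply']
        _ ≤ c * ‖(F a)^[n] X - P‖ := hstep _ hin
        _ ≤ c * (c ^ n * ‖X - P‖) := by gcongr
        _ = c ^ (n+1) * ‖X - P‖ := by ring
  rw [tendsto_iff_norm_sub_tendsto_zero]
  apply squeeze_zero (fun n => norm_nonneg _) hbound
  have := (tendsto_pow_atTop_nhds_zero_of_lt_one hc0 hc1).mul_const ‖X - P‖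
  simpa using this
end

section
/- For each integer l, the straight line Γₗ⁻ = {(x,y) ∈ ℝ² : y = −x + 2lπ} is strongly invariant under F, that is, F(Γₗ⁻) = Γₗ⁻. -/
lemma sin_line (x : ℝ) (l : ℤ) : Real.sin (-x + 2 * l * Real.pi) = -Real.sin x := by
  have : -x + 2 * l * Real.pi = -x + l * (2 * Real.pi) := by ring
  rw [this, Real.sin_add_int_mul_two_pi, Real.sin_neg]

lemma surj_g (a : ℝ) (ha : 0 < a) (ha' : a < 1/6) (u : ℝ) :
    ∃ x : ℝ, x + a * Real.sin x = u := by
  have hc : Continuous fun x : ℝ => x + a * Real.sin x := by continuity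
  have h1 : (u - 1) + a * Real.sin (u - 1) ≤ u := by
    nlinarith [Real.neg_one_le_sin (u - 1), Real.sin_le_one (u - 1)]
  have h2 : u ≤ (u + 1) + a * Real.sin (u + 1) := by
    nlinarith [Real.neg_one_le_sin (u + 1), Real.sin_le_one (u + 1)]
  have := intermediate_value_Icc (by linarith : u - 1 ≤ u + 1) hc.continuousOn
  have hmem : u ∈ Set.Icc ((u - 1) + a * Real.sin (u - 1)) ((u + 1) + a * Real.sin (u + 1)) :=
    ⟨h1, h2⟩
  obtain ⟨x, _, hx⟩ := this hmem
  exact ⟨x, hx⟩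

theorem stmt_8 (a : ℝ) (ha : 0 < a) (ha' : a < 1/6) :
    ∀ l : ℤ,
      F a '' {p : ℝ × ℝ | p.2 = -p.1 + 2 * l * Real.pi}
        = {p : ℝ × ℝ | p.2 = -p.1 + 2 * l * Real.pi} := by
  intro l
  ext q
  constructor
  · rintro ⟨⟨x, y⟩, hp, rfl⟩
    simp only [Set.mem_setOf_eq] at hp ⊢
    subst hp
    simp only [F, sin_line]
    ring
  · intro hq
    simp only [Set.mem_setOf_eq] at hq
    obtain ⟨x, hx⟩ := surj_g a ha ha' q.1
    refine ⟨(x, -x + 2 * l * Real.pi), by simp, ?_⟩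
    simp only [F, sin_line]
    have hq2 : q.2 = -q.1 + 2 * l * Real.pi := hq
    have : q = (q.1, q.2) := rfl
    rw [this, hq2, ← hx]
    simp only [Prod.mk.injEq]
    constructor <;> ring
end

section
/- For all integers l, k, the square S_{lk} = {(x,y) ∈ ℝ² : −x + 2(l−1)π ≤ y ≤ −x + 2lπ and x + 2(k−1)π ≤ y ≤ x + 2kπ} is invariant under F, that is, F(S_{lk}) ⊆ S_{lk}. -/
open Real

lemma key_interval (t e : ℝ) (ht1 : -(2*π) ≤ t) (ht2 : t ≤ 0)
    (he : |e| ≤ 2 * |Real.sin (t/2)|) : -(2*π) ≤ t + e ∧ t + e ≤ 0 := by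
  have h1 : |Real.sin (t/2)| ≤ |t/2| := Real.abs_sin_le_abs
  have h2 : |Real.sin (t/2)| ≤ |(t + 2*π)/2| := by
    have : Real.sin ((t + 2*π)/2) = -Real.sin (t/2) := by
      have : (t + 2*π)/2 = t/2 + π := by ring
      rw [this, Real.sin_add_pi]
    calc |Real.sin (t/2)| = |Real.sin ((t + 2*π)/2)| := by rw [this, abs_neg]
      _ ≤ |(t + 2*π)/2| := Real.abs_sin_le_abs
  have ht2' : |t/2| = -(t/2) := abs_of_nonpos (by linarith)
  have ht1' : |(t + 2*π)/2| = (t + 2*π)/2 := abs_of_nonneg (by linarith)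
  rw [ht2'] at h1; rw [ht1'] at h2
  have he1 : e ≤ |e| := le_abs_self e
  have he2 : -e ≤ |e| := neg_le_abs e
  constructor <;> nlinarith

lemma abs_sin_shift (z : ℝ) (n : ℤ) : |Real.sin (z - n * π)| = |Real.sin z| := by
  have hc : Real.cos ((n:ℝ) * π) = (-1) ^ n := by
    have := Real.cos_int_mul_pi_sub 0 n
    simpa using this
  rw [Real.sin_sub, Real.sin_int_mul_pi, hc, mul_zero, sub_zero, abs_mul]
  rcases Int.even_or_odd n with h | h
  · simp [h.neg_one_zpow]
  · simp [h.neg_one_zpow]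

theorem stmt_9 (a : ℝ) (ha : 0 < a) (ha' : a < 1/6) :
    ∀ l k : ℤ,
      F a '' {p : ℝ × ℝ |
          (-p.1 + 2 * (l - 1) * Real.pi ≤ p.2 ∧ p.2 ≤ -p.1 + 2 * l * Real.pi) ∧
          (p.1 + 2 * (k - 1) * Real.pi ≤ p.2 ∧ p.2 ≤ p.1 + 2 * k * Real.pi)}
        ⊆ {p : ℝ × ℝ |
          (-p.1 + 2 * (l - 1) * Real.pi ≤ p.2 ∧ p.2 ≤ -p.1 + 2 * l * Real.pi) ∧
          (p.1 + 2 * (k - 1) * Real.pi ≤ p.2 ∧ p.2 ≤ p.1 + 2 * k * Real.pi)} := by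
  intro l k q hq
  obtain ⟨⟨x, y⟩, ⟨⟨h1, h2⟩, ⟨h3, h4⟩⟩, rfl⟩ := hq
  simp only [F, Set.mem_setOf_eq]
  -- sum part
  set t : ℝ := (x + y) - 2 * l * π with hts
  have ht1 : -(2*π) ≤ t := by push_cast [hts]; linarith
  have ht2 : t ≤ 0 := by push_cast [hts]; linarith
  have hsum : Real.sin x + Real.sin y = 2 * Real.sin ((x+y)/2) * Real.cos ((x-y)/2) := by
    have := Real.sin_sub_sin x (-y)
    simp only [Real.sin_neg, sub_neg_eq_add] at this
    convert this using 3 <;> ring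
  have habs1 : |Real.sin ((x+y)/2)| = |Real.sin (t/2)| := by
    have : t/2 = (x+y)/2 - l * π := by rw [hts]; ring
    rw [this, abs_sin_shift]
  have he : |3 * a * (Real.sin x + Real.sin y)| ≤ 2 * |Real.sin (t/2)| := by
    rw [← habs1]
    have hc : |Real.cos ((x-y)/2)| ≤ 1 := Real.abs_cos_le_one _
    have hs : (0:ℝ) ≤ |Real.sin ((x+y)/2)| := abs_nonneg _
    have h0 : |Real.sin x + Real.sin y| ≤ 2 * |Real.sin ((x+y)/2)| := by
      rw [hsum, abs_mul, abs_mul]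
      norm_num
      nlinarith
    rw [abs_mul, abs_of_nonneg (by linarith : (0:ℝ) ≤ 3 * a)]
    nlinarith [abs_nonneg (Real.sin x + Real.sin y)]
  obtain ⟨hS1, hS2⟩ := key_interval t (3 * a * (Real.sin x + Real.sin y)) ht1 ht2 he
  -- diff part
  set s : ℝ := (y - x) - 2 * k * π with hss
  have hs1 : -(2*π) ≤ s := by push_cast [hss]; linarith
  have hs2 : s ≤ 0 := by push_cast [hss]; linarith
  have hdiff : Real.sin y - Real.sin x = 2 * Real.sin ((y-x)/2) * Real.cos ((y+x)/2) :=
    Real.sin_sub_sin y x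
  have habs2 : |Real.sin ((y-x)/2)| = |Real.sin (s/2)| := by
    have : s/2 = (y-x)/2 - k * π := by rw [hss]; ring
    rw [this, abs_sin_shift]
  have he' : |a * (Real.sin y - Real.sin x)| ≤ 2 * |Real.sin (s/2)| := by
    rw [← habs2]
    have hc : |Real.cos ((y+x)/2)| ≤ 1 := Real.abs_cos_le_one _
    have hs' : (0:ℝ) ≤ |Real.sin ((y-x)/2)| := abs_nonneg _
    have h0 : |Real.sin y - Real.sin x| ≤ 2 * |Real.sin ((y-x)/2)| := by
      rw [hdiff, abs_mul, abs_mul]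
      norm_num
      nlinarith
    rw [abs_mul, abs_of_nonneg ha.le]
    nlinarith [abs_nonneg (Real.sin y - Real.sin x)]
  obtain ⟨hD1, hD2⟩ := key_interval s (a * (Real.sin y - Real.sin x)) hs1 hs2 he'
  rw [hts] at hS1 hS2
  rw [hss] at hD1 hD2
  push_cast at hS1 hS2 hD1 hD2 ⊢
  refine ⟨⟨by linarith, by linarith⟩, ⟨by linarith, by linarith⟩⟩
end

section
/- For every x ∈ (π/2, π): the image F(x, π − x) of the point (x, π − x) on the edge l₁ lies in the interior of the square s₂; in particular both coordinates strictly increase, i.e., x + 3a sin x > x and π − x + 3a sin x > π − x. -/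
def s2 : Set (ℝ × ℝ) :=
  {p : ℝ × ℝ | (p.1 - Real.pi ≤ p.2 ∧ p.2 ≤ p.1) ∧
               (-p.1 + Real.pi ≤ p.2 ∧ p.2 ≤ -p.1 + 2 * Real.pi)}

theorem stmt_16 (a : ℝ) (ha : 0 < a) (ha' : a < 1/6) :
    ∀ x ∈ Set.Ioo (Real.pi / 2) Real.pi,
      F a (x, Real.pi - x) ∈ interior s2 ∧
      x + 3 * a * Real.sin x > x ∧
      Real.pi - x + 3 * a * Real.sin x > Real.pi - x := by
  intro x hx
  obtain ⟨hx1, hx2⟩ := hx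
  have hπ := Real.pi_pos
  have hπ3 := Real.pi_gt_three
  have hs : Real.sin x > 0 :=
    Real.sin_pos_of_pos_of_lt_pi (lt_trans (by positivity) hx1) hx2
  have hsin1 : Real.sin x ≤ 1 := Real.sin_le_one x
  have key : F a (x, Real.pi - x) =
      (x + 3 * a * Real.sin x, Real.pi - x + 3 * a * Real.sin x) := by
    simp only [F, Real.sin_pi_sub, Prod.mk.injEq]
    constructor <;> ring
  refine ⟨?_, by nlinarith, by nlinarith⟩
  rw [key]
  set U : Set (ℝ × ℝ) :=
    {p : ℝ × ℝ | (p.1 - Real.pi < p.2 ∧ p.2 < p.1) ∧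
                 (-p.1 + Real.pi < p.2 ∧ p.2 < -p.1 + 2 * Real.pi)} with hUdef
  have hU : IsOpen U := by
    have hEq : U = ({p : ℝ × ℝ | p.1 - Real.pi < p.2} ∩ {p : ℝ × ℝ | p.2 < p.1}) ∩
        ({p : ℝ × ℝ | -p.1 + Real.pi < p.2} ∩ {p : ℝ × ℝ | p.2 < -p.1 + 2 * Real.pi}) := by
      ext p
      simp only [hUdef, Set.mem_setOf_eq, Set.mem_inter_iff]
    rw [hEq]
    exact ((isOpen_lt (by continuity) (by continuity)).inter
        (isOpen_lt (by continuity) (by continuity))).inter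
      ((isOpen_lt (by continuity) (by continuity)).inter
        (isOpen_lt (by continuity) (by continuity)))
  have hsub : U ⊆ s2 := by
    rintro p ⟨⟨h1, h2⟩, ⟨h3, h4⟩⟩
    exact ⟨⟨le_of_lt h1, le_of_lt h2⟩, ⟨le_of_lt h3, le_of_lt h4⟩⟩
  apply interior_maximal hsub hU
  refine ⟨⟨by simp only; nlinarith, by simp only; nlinarith⟩,
          ⟨by simp only; nlinarith, by simp only; nlinarith⟩⟩
end

section
/- There exists a heteroclinic orbit of F connecting the repeller (0,0) to the saddle (π,0): there exists a sequence X : ℤ → ℝ² with X(n+1) = F(X(n)) for all n ∈ ℤ, X(n) ≠ (0,0) and X(n) ≠ (π,0) for all n, X(n) → (π,0) as n → +∞, and X(n) → (0,0) as n → −∞. -/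
open Real Filter Topology Function Set

lemma tendsto_iterate_nhds_zero_of_norm_le {E : Type*} [SeminormedAddGroup E] {f : E → E} {r δ : ℝ}
    (hr0 : 0 ≤ r) (hr1 : r < 1) (hf : ∀ x, ‖x‖ ≤ δ → ‖f x‖ ≤ r * ‖x‖) {x : E} (hx : ‖x‖ ≤ δ) :
    Tendsto (fun n => f^[n] x) atTop (𝓝 0) := by
  have key (n : ℕ) : ‖f^[n] x‖ ≤ r ^ n * ‖x‖ := by
    induction n with
    | zero => simp
    | succ n ih =>
      have hδ : ‖f^[n] x‖ ≤ δ :=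
        ih.trans ((mul_le_of_le_one_left (norm_nonneg _) (pow_le_one₀ hr0 hr1.le)).trans hx)
      rw [iterate_succ_apply', pow_succ', mul_assoc]
      exact (hf _ hδ).trans (mul_le_mul_of_nonneg_left ih hr0)
  exact squeeze_zero_norm key
    (by simpa using (tendsto_pow_atTop_nhds_zero_of_lt_one hr0 hr1).mul_const ‖x‖)

lemma Monotone.exists_tendsto_of_bddAbove {f : ℕ → ℝ × ℝ} (hf : Monotone f)
    (hbdd : BddAbove (range f)) : ∃ L, Tendsto f atTop (𝓝 L) :=
  ⟨_, (tendsto_atTop_ciSup (monotone_fst.comp hf)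
      (range_comp _ _ ▸ monotone_fst.map_bddAbove hbdd)).prodMk_nhds
    (tendsto_atTop_ciSup (monotone_snd.comp hf)
      (range_comp _ _ ▸ monotone_snd.map_bddAbove hbdd))⟩

namespace Equiv.Perm

variable {α : Type*} {σ : Perm α} {x : α} {l : Filter α}

lemma tendsto_zpow_apply_atTop (h : Tendsto (fun n => σ^[n] x) atTop l) :
    Tendsto (fun n : ℤ => (σ ^ n) x) atTop l := by
  rw [← Nat.map_cast_int_atTop, tendsto_map'_iff]
  simpa [comp_def, ← coe_pow] using h

lemma tendsto_zpow_apply_atBot (h : Tendsto (fun n => σ.symm^[n] x) atTop l) :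
    Tendsto (fun n : ℤ => (σ ^ n) x) atBot l := by
  rw [← map_neg_atTop, ← Nat.map_cast_int_atTop, map_map, tendsto_map'_iff]
  simpa [comp_def, ← Perm.inv_def, ← coe_pow] using h

lemma zpow_apply_ne_of_apply_eq_self {y : α} (hy : σ y = y) (hx : x ≠ y) (n : ℤ) : (σ ^ n) x ≠ y :=
  fun h => hx ((σ ^ n).injective (h.trans (zpow_apply_eq_self_of_apply_eq_self hy n).symm))

end Equiv.Perm

namespace Heteroclinic

noncomputable def G (b c : ℝ) (w : ℝ × ℝ) : ℝ × ℝ :=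
  (w.1 + b * (cos (w.2 / 2) * sin (w.1 / 2)), w.2 + c * (sin (w.2 / 2) * cos (w.1 / 2)))

noncomputable def toXY (w : ℝ × ℝ) : ℝ × ℝ := ((w.1 + w.2) / 2, (w.2 - w.1) / 2)

lemma continuous_G (b c : ℝ) : Continuous (G b c) := by
  unfold G; fun_prop

lemma continuous_toXY : Continuous toXY := by
  unfold toXY; fun_prop

lemma semiconj_toXY (a : ℝ) : Semiconj toXY (G (2 * a) (6 * a)) (F a) := by
  rintro ⟨u, v⟩
  have hx : (u + v) / 2 = u / 2 + v / 2 := by ring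
  have hy : (v - u) / 2 = v / 2 - u / 2 := by ring
  simp only [F, G, toXY, hx, hy, sin_add, sin_sub, Prod.mk.injEq]
  constructor <;> ring

lemma semiconj_swap (b c : ℝ) : Semiconj Prod.swap (G b c) (G c b) := fun _ => by
  simp only [G, Prod.swap_prod_mk, Prod.fst_swap, Prod.snd_swap, mul_comm (cos _)]

@[simp]
lemma iterate_G_swap (b c : ℝ) (n : ℕ) (w : ℝ × ℝ) :
    (G c b)^[n] w.swap = ((G b c)^[n] w).swap :=
  ((semiconj_swap b c).iterate_right n w).symm

section Square

variable {b c : ℝ} {w : ℝ × ℝ}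

lemma cos_half_le {v : ℝ} (hv : v ≤ π) : cos (v / 2) ≤ (π - v) / 2 := by
  rw [← sin_pi_div_two_sub]
  linarith [sin_le (x := π / 2 - v / 2) (by linarith)]

lemma cos_half_nonneg {v : ℝ} (hv : v ∈ Icc 0 π) : 0 ≤ cos (v / 2) :=
  cos_nonneg_of_mem_Icc ⟨by linarith [pi_pos, hv.1], by linarith [hv.2]⟩

lemma sin_half_nonneg {v : ℝ} (hv : v ∈ Icc 0 π) : 0 ≤ sin (v / 2) :=
  sin_nonneg_of_nonneg_of_le_pi (by linarith [hv.1]) (by linarith [pi_pos, hv.2])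

lemma le_G (hb : 0 ≤ b) (hc : 0 ≤ c) (hw : w ∈ Icc 0 π ×ˢ Icc 0 π) : w ≤ G b c w := by
  constructor
  · exact le_add_of_nonneg_right
      (mul_nonneg hb (mul_nonneg (cos_half_nonneg hw.2) (sin_half_nonneg hw.1)))
  · exact le_add_of_nonneg_right
      (mul_nonneg hc (mul_nonneg (sin_half_nonneg hw.2) (cos_half_nonneg hw.1)))

lemma fst_G_sub_le (hb : 0 ≤ b) (hv : w.2 ∈ Icc 0 π) :
    (G b c w).1 - w.1 ≤ b / 2 * (π - w.2) := by
  have h : cos (w.2 / 2) * sin (w.1 / 2) ≤ (π - w.2) / 2 :=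
    (mul_le_of_le_one_right (cos_half_nonneg hv) (sin_le_one _)).trans (cos_half_le hv.2)
  simp only [G]
  nlinarith

lemma not_pi_le_fst_G_and_snd_G (hb : 0 ≤ b) (hc : 0 ≤ c) (hbc : b * c < 4)
    (hw : w ∈ Ico 0 π ×ˢ Ico 0 π) : ¬(π ≤ (G b c w).1 ∧ π ≤ (G b c w).2) := by
  rintro ⟨hu, hv⟩
  have h1 := fst_G_sub_le (c := c) hb (Ico_subset_Icc_self hw.2)
  have h2 := fst_G_sub_le (c := b) hc (w := w.swap) (Ico_subset_Icc_self hw.1)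
  simp only [← semiconj_swap b c w, Prod.fst_swap, Prod.snd_swap] at h2
  have hu' : 0 < π - w.1 := by linarith [hw.1.2]
  nlinarith [mul_le_mul_of_nonneg_left h2 hb]

lemma G_of_fst_eq_pi (hb : 0 < b) (hv : w.2 ∈ Ico 0 π) (hu : w.1 = π) :
    π < (G b c w).1 ∧ (G b c w).2 = w.2 := by
  have : 0 < cos (w.2 / 2) :=
    cos_pos_of_mem_Ioo ⟨by linarith [pi_pos, hv.1], by linarith [hv.2]⟩
  simp only [G, hu, sin_pi_div_two, cos_pi_div_two]
  constructor
  · nlinarith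
  · ring

lemma eq_pi_pi_of_isFixedPt (hb : b ≠ 0) (hc : c ≠ 0) (hw : w ∈ Icc 0 π ×ˢ Icc 0 π)
    (hfix : IsFixedPt (G b c) w) (h0 : w ≠ 0) : w = (π, π) := by
  obtain ⟨⟨hu0, huπ⟩, hv0, hvπ⟩ := hw
  have h1 : cos (w.2 / 2) * sin (w.1 / 2) = 0 := by
    have := congrArg Prod.fst hfix
    simp only [G] at this
    simpa [hb] using this
  have h2 : sin (w.2 / 2) * cos (w.1 / 2) = 0 := by
    have := congrArg Prod.snd hfix
    simp only [G] at this
    simpa [hc] using this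
  have eq_pi {t : ℝ} (ht0 : 0 ≤ t) (htπ : t ≤ π) (h : cos (t / 2) = 0) : t = π := by
    by_contra hne
    exact (cos_pos_of_mem_Ioo ⟨by linarith [pi_pos], by linarith [lt_of_le_of_ne htπ hne]⟩).ne' h
  have eq_zero {t : ℝ} (ht0 : 0 ≤ t) (htπ : t ≤ π) (h : sin (t / 2) = 0) : t = 0 := by
    have := (sin_eq_zero_iff_of_lt_of_lt (by linarith [pi_pos]) (by linarith [pi_pos])).1 h
    linarith
  rcases mul_eq_zero.1 h1 with hv | hu
  · have hv := eq_pi hv0 hvπ hv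
    rw [hv, sin_pi_div_two, one_mul] at h2
    exact Prod.ext (eq_pi hu0 huπ h2) hv
  · have hu := eq_zero hu0 huπ hu
    rw [hu, zero_div, cos_zero, mul_one] at h2
    exact absurd (Prod.ext hu (eq_zero hv0 hvπ h2)) h0

lemma tendsto_iterate_G (hb : 0 < b) (hc : 0 < c)
    (hw : ∀ n, (G b c)^[n] w ∈ Icc 0 π ×ˢ Icc 0 π) (h0 : w ≠ 0) :
    Tendsto (fun n => (G b c)^[n] w) atTop (𝓝 (π, π)) := by
  have hmono : Monotone fun n => (G b c)^[n] w := monotone_nat_of_le_succ fun n => by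
    simpa only [iterate_succ_apply'] using le_G hb.le hc.le (hw n)
  obtain ⟨L, hL⟩ := hmono.exists_tendsto_of_bddAbove
    ⟨(π, π), by rintro _ ⟨n, rfl⟩; exact ⟨(hw n).1.2, (hw n).2.2⟩⟩
  have hLmem : L ∈ Icc 0 π ×ˢ Icc 0 π := by
    rw [Icc_prod_Icc] at hw ⊢
    exact isClosed_Icc.mem_of_tendsto hL (Eventually.of_forall hw)
  have hL0 : L ≠ 0 := by
    rintro rfl
    exact h0 (le_antisymm (hmono.ge_of_tendsto hL 0) ⟨(hw 0).1.1, (hw 0).2.1⟩)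
  rwa [eq_pi_pi_of_isFixedPt hb.ne' hc.ne' hLmem
    (isFixedPt_of_tendsto_iterate hL (continuous_G b c).continuousAt) hL0] at hL

end Square

section Exits

variable {b c : ℝ} {w : ℝ × ℝ}

def ExitsFst (b c : ℝ) (w : ℝ × ℝ) : Prop :=
  ∃ n, π < ((G b c)^[n] w).1 ∧ ∀ m ≤ n, ((G b c)^[m] w).2 < π

-- Crossing `v = π` first, written through the symmetry `Prod.swap` between `G b c` and `G c b`.
def ExitsSnd (b c : ℝ) (w : ℝ × ℝ) : Prop := ExitsFst c b w.swap

lemma exitsSnd_iff :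
    ExitsSnd b c w ↔ ∃ n, π < ((G b c)^[n] w).2 ∧ ∀ m ≤ n, ((G b c)^[m] w).1 < π := by
  simp only [ExitsSnd, ExitsFst, iterate_G_swap, Prod.fst_swap, Prod.snd_swap]

lemma not_exitsFst_and_exitsSnd : ¬(ExitsFst b c w ∧ ExitsSnd b c w) := by
  rw [exitsSnd_iff]
  rintro ⟨⟨n, hn, hn'⟩, k, hk, hk'⟩
  rcases le_total n k with h | h
  · exact (hk' n h).not_gt hn
  · exact (hn' k h).not_gt hk

lemma isOpen_setOf_exitsFst {f : ℝ → ℝ × ℝ} (hf : Continuous f) :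
    IsOpen {s | ExitsFst b c (f s)} := by
  have hW (n : ℕ) : Continuous fun s => (G b c)^[n] (f s) :=
    ((continuous_G b c).iterate n).comp hf
  have : {s | ExitsFst b c (f s)} = ⋃ n, {s | π < ((G b c)^[n] (f s)).1} ∩
      ⋂ m ∈ Iic n, {s | ((G b c)^[m] (f s)).2 < π} := by
    ext s
    simp [ExitsFst]
  rw [this]
  refine isOpen_iUnion fun n => (isOpen_lt continuous_const (hW n).fst).inter ?_
  exact (finite_Iic n).isOpen_biInter fun m _ => isOpen_lt (hW m).snd continuous_const

-- If the orbit lands exactly on the side `u = π`, it crosses it at the next step.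
lemma exitsFst_of_pi_le (hb : 0 < b) {n : ℕ} (hv : ∀ m ≤ n, ((G b c)^[m] w).2 < π)
    (hv0 : 0 ≤ ((G b c)^[n] w).2) (hu : π ≤ ((G b c)^[n] w).1) : ExitsFst b c w := by
  rcases hu.lt_or_eq with hu | hu
  · exact ⟨n, hu, hv⟩
  · obtain ⟨hu', hv'⟩ := G_of_fst_eq_pi (c := c) hb ⟨hv0, hv n le_rfl⟩ hu.symm
    refine ⟨n + 1, by rwa [iterate_succ_apply'], fun m hm => ?_⟩
    rcases Nat.le_succ_iff.1 hm with hm | rfl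
    · exact hv m hm
    · rw [iterate_succ_apply', hv']
      exact hv n le_rfl

lemma iterate_mem_of_not_exits (hb : 0 < b) (hc : 0 < c) (hbc : b * c < 4)
    (hw : w ∈ Ico 0 π ×ˢ Ico 0 π) (hfst : ¬ExitsFst b c w) (hsnd : ¬ExitsSnd b c w) (n : ℕ) :
    (G b c)^[n] w ∈ Ico 0 π ×ˢ Ico 0 π := by
  suffices ∀ n, ∀ m ≤ n, (G b c)^[m] w ∈ Ico 0 π ×ˢ Ico 0 π from this n n le_rfl
  intro n
  induction n with
  | zero => simpa using hw
  | succ n ih =>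
    have hn := ih n le_rfl
    have hle := le_G hb.le hc.le (prod_mono Ico_subset_Icc_self Ico_subset_Icc_self hn)
    have hnot := not_pi_le_fst_G_and_snd_G hb.le hc.le hbc hn
    rw [← iterate_succ_apply' (G b c)] at hle hnot
    have hu0 : 0 ≤ ((G b c)^[n + 1] w).1 := hn.1.1.trans hle.1
    have hv0 : 0 ≤ ((G b c)^[n + 1] w).2 := hn.2.1.trans hle.2
    have hu : ((G b c)^[n + 1] w).1 < π := by
      by_contra! hu
      refine hfst (exitsFst_of_pi_le hb (fun m hm => ?_) hv0 hu)
      rcases Nat.le_succ_iff.1 hm with hm | rfl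
      · exact (ih m hm).2.2
      · exact not_le.1 fun hv => hnot ⟨hu, hv⟩
    have hv : ((G b c)^[n + 1] w).2 < π := by
      by_contra! hv
      refine hsnd (exitsFst_of_pi_le hc (n := n + 1) (fun m hm => ?_) ?_ ?_) <;>
        simp only [iterate_G_swap, Prod.fst_swap, Prod.snd_swap]
      · rcases Nat.le_succ_iff.1 hm with hm | rfl
        · exact (ih m hm).1.2
        · exact hu
      · exact hu0
      · exact hv
    intro m hm
    rcases Nat.le_succ_iff.1 hm with hm | rfl
    · exact ih m hm
    · exact ⟨⟨hu0, hu⟩, hv0, hv⟩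

lemma exitsFst_of_snd_eq_zero (hb : 0 < b) (hc : 0 < c) (hbc : b * c < 4)
    (hu : w.1 ∈ Ioo 0 π) (hv : w.2 = 0) : ExitsFst b c w := by
  by_contra hfst
  have hzero (n : ℕ) : ((G b c)^[n] w).2 = 0 := by
    induction n with
    | zero => exact hv
    | succ n ih => simp [iterate_succ_apply', G, ih]
  have hsnd : ¬ExitsSnd b c w := by
    rw [exitsSnd_iff]
    rintro ⟨n, hn, -⟩
    linarith [hzero n, pi_pos]
  have hmem := iterate_mem_of_not_exits hb hc hbc ⟨Ioo_subset_Ico_self hu, by simp [hv, pi_pos]⟩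
    hfst hsnd
  have hlim := (tendsto_iterate_G hb hc (fun n => prod_mono Ico_subset_Icc_self Ico_subset_Icc_self
    (hmem n)) fun h => hu.1.ne' (congrArg Prod.fst h)).snd_nhds
  simp only [hzero] at hlim
  exact pi_pos.ne (tendsto_nhds_unique tendsto_const_nhds hlim)

lemma exists_tendsto_iterate_G (hb : 0 < b) (hc : 0 < c) (hbc : b * c < 4) :
    ∃ s ∈ Icc (0 : ℝ) 1,
      Tendsto (fun n => (G b c)^[n] ((1 - s) / 4, s / 4)) atTop (𝓝 (π, π)) := by
  set P : ℝ → ℝ × ℝ := fun s => ((1 - s) / 4, s / 4)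
  have hP : Continuous P := by fun_prop
  obtain ⟨s, hs, hfst, hsnd⟩ : ∃ s ∈ Icc (0 : ℝ) 1, ¬ExitsFst b c (P s) ∧ ¬ExitsSnd b c (P s) := by
    by_contra! hcover
    have hquarter : (1 / 4 : ℝ) ∈ Ioo 0 π := ⟨by norm_num, by linarith [pi_gt_three]⟩
    obtain ⟨s, -, hs⟩ := isPreconnected_Icc _ _ (isOpen_setOf_exitsFst hP)
      (isOpen_setOf_exitsFst (continuous_swap.comp hP))
      (fun s hs => or_iff_not_imp_left.2 (hcover s hs))
      ⟨0, by simp, exitsFst_of_snd_eq_zero hb hc hbc (by norm_num [P, hquarter]) (by simp [P])⟩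
      ⟨1, by simp, exitsFst_of_snd_eq_zero hc hb (by linarith) (by norm_num [P, hquarter])
        (by simp [P])⟩
    exact not_exitsFst_and_exitsSnd hs
  have hPs : P s ∈ Ico 0 π ×ˢ Ico 0 π := by
    simp only [P, mem_prod, mem_Ico]
    refine ⟨⟨?_, ?_⟩, ?_, ?_⟩ <;> linarith [hs.1, hs.2, pi_gt_three]
  have hP0 : P s ≠ 0 := fun h => by
    have h1 := congrArg Prod.fst h
    have h2 := congrArg Prod.snd h
    simp only [P, Prod.fst_zero, Prod.snd_zero] at h1 h2
    linarith
  exact ⟨s, hs, tendsto_iterate_G hb hc (fun n => prod_mono Ico_subset_Icc_self Ico_subset_Icc_self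
    (iterate_mem_of_not_exits hb hc hbc hPs hfst hsnd n)) hP0⟩

end Exits

section Backward

variable {a : ℝ}

lemma F_neg (p : ℝ × ℝ) : F a (-p) = -F a p := by
  simp only [F, Prod.fst_neg, Prod.snd_neg, sin_neg, Prod.neg_mk, Prod.mk.injEq]
  constructor <;> ring

lemma F_swap (p : ℝ × ℝ) : F a p.swap = (F a p).swap := by
  simp only [F, Prod.fst_swap, Prod.snd_swap, Prod.swap_prod_mk, Prod.mk.injEq]
  constructor <;> ring

lemma norm_F_sub_F_sub_le (ha : 0 ≤ a) (p q : ℝ × ℝ) :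
    ‖F a p - F a q - (p - q)‖ ≤ 3 * a * ‖p - q‖ := by
  have h1 := abs_le.1 ((abs_sin_sub_sin_le p.1 q.1).trans (norm_fst_le (p - q)))
  have h2 := abs_le.1 ((abs_sin_sub_sin_le p.2 q.2).trans (norm_snd_le (p - q)))
  rw [Prod.norm_def]
  refine max_le ?_ ?_ <;>
  · simp only [F, Prod.fst_sub, Prod.snd_sub, Real.norm_eq_abs, abs_le]
    constructor <;> nlinarith

noncomputable def homeomorphF (ha : 0 ≤ a) (ha' : a < 1 / 3) : ℝ × ℝ ≃ₜ ℝ × ℝ :=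
  ApproximatesLinearOn.toHomeomorph (f' := ContinuousLinearEquiv.refl ℝ (ℝ × ℝ))
    (c := ⟨3 * a, by positivity⟩) (F a) (fun p _ q _ => norm_F_sub_F_sub_le ha p q) (Or.inr (by
      rw [ContinuousLinearEquiv.refl_symm, ContinuousLinearEquiv.coe_refl,
        ContinuousLinearMap.nnnorm_id, inv_one]
      exact (by linarith : 3 * a < 1)))

@[simp]
lemma coe_homeomorphF (ha : 0 ≤ a) (ha' : a < 1 / 3) : ⇑(homeomorphF ha ha') = F a := rfl

lemma mul_le_fst_F (ha : 0 ≤ a) {p : ℝ × ℝ} (h2 : |p.2| ≤ p.1) (h1 : p.1 ≤ π / 2) :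
    (1 + 2 / π * a) * p.1 ≤ (F a p).1 := by
  have hsin : 2 / π * p.1 ≤ sin p.1 := mul_le_sin ((abs_nonneg _).trans h2) h1
  have hsin' : sin (-p.1) ≤ sin p.2 := sin_le_sin_of_le_of_le_pi_div_two (by linarith)
    (by linarith [le_abs_self p.2]) (by linarith [neg_abs_le p.2])
  rw [sin_neg] at hsin'
  simp only [F]
  nlinarith [mul_le_mul_of_nonneg_left hsin ha, mul_le_mul_of_nonneg_left hsin' ha]

-- By the symmetries `F_swap` and `F_neg` it suffices to treat `|p.2| ≤ p.1`.
lemma mul_norm_le_norm_F (ha : 0 ≤ a) {p : ℝ × ℝ} (hp : ‖p‖ ≤ π / 2) :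
    (1 + 2 / π * a) * ‖p‖ ≤ ‖F a p‖ := by
  wlog h : |p.2| ≤ |p.1| generalizing p
  · simpa [F_swap, Prod.norm_def, max_comm] using
      this (p := p.swap) (by simpa [Prod.norm_def, max_comm] using hp)
        (by simpa using (not_le.1 h).le)
  wlog h' : 0 ≤ p.1 generalizing p
  · simpa [F_neg] using this (p := -p) (by simpa using hp) (by simpa using h) (by simp; linarith)
  have hp1 : ‖p‖ = p.1 := by
    rw [Prod.norm_def, Real.norm_eq_abs, Real.norm_eq_abs, max_eq_left h, abs_of_nonneg h']
  rw [hp1] at hp ⊢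
  exact (mul_le_fst_F ha (abs_of_nonneg h' ▸ h) hp).trans
    ((Real.le_norm_self _).trans (norm_fst_le _))

lemma norm_le_two_mul_norm_F (ha : 0 ≤ a) (ha' : a ≤ 1 / 6) (p : ℝ × ℝ) : ‖p‖ ≤ 2 * ‖F a p‖ := by
  have h := norm_F_sub_F_sub_le ha p 0
  have hF0 : F a 0 = 0 := by simp [F]
  rw [hF0, sub_zero, sub_zero] at h
  have := norm_sub_le (F a p) (F a p - p)
  rw [sub_sub_cancel] at this
  nlinarith [norm_nonneg p]

lemma norm_homeomorphF_symm_le (ha : 0 ≤ a) (ha' : a ≤ 1 / 6) {q : ℝ × ℝ} (hq : ‖q‖ ≤ π / 4) :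
    ‖(homeomorphF ha (by linarith)).symm q‖ ≤ (1 + 2 / π * a)⁻¹ * ‖q‖ := by
  set p := (homeomorphF ha (by linarith)).symm q
  have hpq : F a p = q := (homeomorphF ha _).apply_symm_apply q
  rw [← hpq] at hq ⊢
  rw [inv_mul_eq_div, le_div_iff₀ (by positivity), mul_comm]
  exact mul_norm_le_norm_F ha (by linarith [norm_le_two_mul_norm_F ha ha' p])

lemma tendsto_iterate_homeomorphF_symm (ha : 0 < a) (ha' : a ≤ 1 / 6) {p : ℝ × ℝ}
    (hp : ‖p‖ ≤ π / 4) :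
    Tendsto (fun n => (homeomorphF ha.le (by linarith)).symm^[n] p) atTop (𝓝 0) :=
  tendsto_iterate_nhds_zero_of_norm_le (by positivity)
    (inv_lt_one_of_one_lt₀ (lt_add_of_pos_right _ (by positivity)))
    (fun _ hq => norm_homeomorphF_symm_le ha.le ha' hq) hp

end Backward

lemma exists_tendsto_iterate_F {a : ℝ} (ha : 0 < a) (ha' : 3 * a ^ 2 < 1) :
    ∃ p ≠ 0, ‖p‖ ≤ 1 / 8 ∧ Tendsto (fun n => (F a)^[n] p) atTop (𝓝 (π, 0)) := by
  obtain ⟨s, hs, hlim⟩ := exists_tendsto_iterate_G (b := 2 * a) (c := 6 * a) (by positivity)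
    (by positivity) (by nlinarith)
  have hp : toXY ((1 - s) / 4, s / 4) = (1 / 8, (2 * s - 1) / 8) := by
    simp only [toXY]; ext <;> ring
  have hπ : toXY (π, π) = (π, 0) := by simp only [toXY]; ext <;> ring
  refine ⟨toXY ((1 - s) / 4, s / 4), by simp [hp], ?_, ?_⟩
  · rw [hp, Prod.norm_def, Real.norm_eq_abs, Real.norm_eq_abs]
    refine max_le ?_ ?_ <;> rw [abs_le] <;> constructor <;> linarith [hs.1, hs.2]
  · have h := (continuous_toXY.tendsto _).comp hlim
    rw [hπ] at h
    exact h.congr fun n => (semiconj_toXY a).iterate_right n _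

end Heteroclinic

theorem stmt_17 (a : ℝ) (ha : 0 < a) (ha' : a < 1/6) :
    ∃ X : ℤ → ℝ × ℝ,
      (∀ n : ℤ, X (n + 1) = F a (X n)) ∧
      (∀ n : ℤ, X n ≠ ((0, 0) : ℝ × ℝ) ∧ X n ≠ ((Real.pi, 0) : ℝ × ℝ)) ∧
      Filter.Tendsto X Filter.atTop (nhds ((Real.pi, 0) : ℝ × ℝ)) ∧
      Filter.Tendsto X Filter.atBot (nhds ((0, 0) : ℝ × ℝ)) := by
  open Heteroclinic in
  obtain ⟨p, hp0, hp, hlim⟩ := exists_tendsto_iterate_F ha (by nlinarith)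
  set σ : Equiv.Perm (ℝ × ℝ) := (homeomorphF ha.le (by linarith)).toEquiv
  have hσ : ⇑σ = F a := coe_homeomorphF _ _
  have hpπ : p ≠ (π, 0) := fun h => by
    rw [h, Prod.norm_def] at hp
    linarith [le_max_left ‖π‖ ‖(0 : ℝ)‖, Real.le_norm_self π, pi_gt_three]
  refine ⟨fun n => (σ ^ n) p, fun n => ?_, fun n => ⟨?_, ?_⟩, ?_, ?_⟩
  · show (σ ^ (n + 1)) p = F a ((σ ^ n) p)
    rw [add_comm, zpow_one_add, Equiv.Perm.mul_apply, hσ]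
  · exact Equiv.Perm.zpow_apply_ne_of_apply_eq_self (by simp [hσ, F]) hp0 n
  · exact Equiv.Perm.zpow_apply_ne_of_apply_eq_self (by simp [hσ, F]) hpπ n
  · exact Equiv.Perm.tendsto_zpow_apply_atTop (hσ ▸ hlim)
  · exact Equiv.Perm.tendsto_zpow_apply_atBot
      (tendsto_iterate_homeomorphF_symm ha ha'.le (by linarith [pi_gt_three]))
end

section
/- There exists a heteroclinic orbit of F connecting the saddle (π,0) to the sink (π,π): there exists a sequence X : ℤ → ℝ² with X(n+1) = F(X(n)) for all n ∈ ℤ, X(n) ≠ (π,0) and X(n) ≠ (π,π) for all n, X(n) → (π,π) as n → +∞, and X(n) → (π,0) as n → −∞. -/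
open Real Filter Topology Set Function

/-!
Along every orbit of `F a` the energy `cos x + cos y` drops by at least `a/8 ‖(sin x, sin y)‖²`
per step. On a full orbit indexed by `ℤ` these drops are therefore summable, so at both ends the
steps shrink to zero and the orbit approaches the zeros of `sin × sin`. In the region `trap` below
(the quadrilateral with vertices `(π, 0)`, `(π + 1, 2)`, `(π + 1, π)`, `(π, π)`) those zeros are
only the two fixed points, so each end of the orbit converges to one of them. Since the energy
strictly decreases, the forward limit must be the sink (energy `-2`) and the backward limit the
saddle (energy `0`).

Such an orbit exists because `F a` maps `trap` into itself. The images `F^n(trap)` are compact,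
connected and contain both fixed points, so each meets the sphere of radius `1` about `(π, 0)`,
and so does their intersection. Every point of the intersection has a preimage in it, so a point
there has a full orbit. `F a` is the identity plus a `3a`-Lipschitz map, so it is injective, and
an orbit that avoids the fixed points at time `0` never hits them.
-/

section Orbits

variable {α : Type*} {f : α → α}

theorem Set.SurjOn.exists_int_orbit {s : Set α} (hmaps : MapsTo f s s) (hsurj : SurjOn f s s)
    {x : α} (hx : x ∈ s) : ∃ u : ℤ → α, u 0 = x ∧ (∀ n, u (n + 1) = f (u n)) ∧ ∀ n, u n ∈ s := by
  have : Nonempty α := ⟨x⟩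
  set g := invFunOn f s
  have hg : ∀ k, g^[k] x ∈ s := fun k => hsurj.mapsTo_invFunOn.iterate k hx
  refine ⟨fun | Int.ofNat k => f^[k] x | Int.negSucc k => g^[k + 1] x, rfl, ?_, ?_⟩
  · rintro ((_ | k) | (_ | k))
    · rfl
    · exact iterate_succ_apply' f (k + 1) x
    · exact (hsurj.rightInvOn_invFunOn hx).symm
    · show g^[k + 1] x = f (g^[k + 2] x)
      rw [iterate_succ_apply' g (k + 1)]
      exact (hsurj.rightInvOn_invFunOn (hg (k + 1))).symm
  · rintro (k | k)
    · exact hmaps.iterate k hx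
    · exact hg (k + 1)

theorem eq_of_int_orbit_of_injective (hf : Injective f) {u : ℤ → α} (hu : ∀ n, u (n + 1) = f (u n))
    {x : α} (hx : f x = x) {n : ℤ} (hn : u n = x) (m : ℤ) : u m = x := by
  rcases le_total n m with h | h
  · induction m, h using Int.leInduction with
    | base => exact hn
    | succ m _ ih => rw [hu, ih, hx]
  · induction m, h using Int.leInductionDown with
    | base => exact hn
    | pred m _ ih => exact hf (by rw [← hu, sub_add_cancel, ih, hx])

end Orbits

section Attractor

variable {α : Type*} {f : α → α} {K : Set α}

theorem Set.MapsTo.antitone_image_iterate (hfK : MapsTo f K K) : Antitone fun n => f^[n] '' K :=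
  antitone_nat_of_succ_le fun n => by
    rw [iterate_succ, image_comp]
    exact image_mono hfK.image_subset

theorem Set.MapsTo.mapsTo_iInter_image_iterate (hfK : MapsTo f K K) :
    MapsTo f (⋂ n, f^[n] '' K) (⋂ n, f^[n] '' K) := fun x hx =>
  mem_iInter.2 fun n => hfK.antitone_image_iterate n.le_succ <| by
    show f x ∈ f^[n + 1] '' K
    rw [iterate_succ', image_comp]
    exact mem_image_of_mem f (mem_iInter.1 hx n)

variable [TopologicalSpace α] [T2Space α]

theorem IsCompact.inter_iInter_image_iterate_nonempty (hf : Continuous f) (hK : IsCompact K)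
    (hfK : MapsTo f K K) {C : Set α} (hC : IsClosed C) (hne : ∀ n, (f^[n] '' K ∩ C).Nonempty) :
    ((⋂ n, f^[n] '' K) ∩ C).Nonempty := by
  have hc : ∀ n, IsCompact (f^[n] '' K) := fun n => hK.image (hf.iterate n)
  rw [iInter_inter]
  exact IsCompact.nonempty_iInter_of_sequence_nonempty_isCompact_isClosed _
    (fun n => inter_subset_inter_left C (hfK.antitone_image_iterate n.le_succ)) hne
    ((hc 0).inter_right hC) fun n => (hc n).isClosed.inter hC

theorem IsCompact.surjOn_iInter_image_iterate (hf : Continuous f) (hK : IsCompact K)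
    (hfK : MapsTo f K K) : SurjOn f (⋂ n, f^[n] '' K) (⋂ n, f^[n] '' K) := fun y hy => by
  refine hK.inter_iInter_image_iterate_nonempty hf hfK (isClosed_singleton.preimage hf) fun n => ?_
  obtain ⟨x, hx, rfl⟩ : y ∈ f '' (f^[n] '' K) := by
    rw [← image_comp, ← iterate_succ']
    exact mem_iInter.1 hy (n + 1)
  exact ⟨x, hx, rfl⟩

theorem IsCompact.exists_mem_iInter_image_iterate_eq (hf : Continuous f) (hK : IsCompact K)
    (hKc : IsPreconnected K) (hfK : MapsTo f K K) {x y : α} (hx : x ∈ K) (hy : y ∈ K)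
    (hfx : f x = x) (hfy : f y = y) {g : α → ℝ} (hg : Continuous g) {c : ℝ}
    (hc : c ∈ Icc (g x) (g y)) : ∃ z ∈ ⋂ n, f^[n] '' K, g z = c :=
  hK.inter_iInter_image_iterate_nonempty hf hfK (isClosed_singleton.preimage hg) fun n =>
    (hKc.image _ (hf.iterate n).continuousOn).intermediate_value
      ⟨x, hx, iterate_fixed hfx n⟩ ⟨y, hy, iterate_fixed hfy n⟩ hg.continuousOn hc

end Attractor

theorem summable_of_succ_add_le {u v : ℕ → ℝ} (hv : ∀ n, 0 ≤ v n)
    (huv : ∀ n, u (n + 1) + v n ≤ u n) {m : ℝ} (hm : ∀ n, m ≤ u n) : Summable v :=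
  summable_of_sum_range_le hv fun n => calc
    ∑ i ∈ Finset.range n, v i ≤ ∑ i ∈ Finset.range n, (u i - u (i + 1)) :=
      Finset.sum_le_sum fun i _ => by linarith [huv i]
    _ = u 0 - u n := Finset.sum_range_sub' u n
    _ ≤ u 0 - m := by linarith [hm n]

theorem Int.summable_of_succ_add_le {u v : ℤ → ℝ} (hv : ∀ n, 0 ≤ v n)
    (huv : ∀ n, u (n + 1) + v n ≤ u n) {C : ℝ} (hu : ∀ n, |u n| ≤ C) : Summable v := by
  rw [summable_int_iff_summable_nat_and_neg]
  constructor
  · exact _root_.summable_of_succ_add_le (fun n => hv n) (fun n => mod_cast huv n)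
      fun n => neg_le_of_abs_le (hu n)
  · refine _root_.summable_of_succ_add_le (u := fun n : ℕ => -u (1 - n)) (fun n => hv _)
      (fun n => ?_) fun n => neg_le_neg (le_of_abs_le (hu _))
    have := huv (-n)
    rw [show -(n : ℤ) + 1 = 1 - n by ring] at this
    push_cast
    rw [show (1 : ℤ) - (n + 1) = -n by ring]
    linarith

theorem tendsto_of_min_dist_lt {α : Type*} [PseudoMetricSpace α] {u : ℤ → α} {p q : α} {N : ℤ}
    (hnear : Tendsto (fun n => min (dist (u n) p) (dist (u n) q)) atTop (𝓝 0))
    (hN : ∀ n ≥ N, min (dist (u n) p) (dist (u n) q) < dist p q / 3 ∧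
      dist (u (n + 1)) (u n) < dist p q / 3)
    (hp : dist (u N) p < dist p q / 3) : Tendsto u atTop (𝓝 p) := by
  have hstay : ∀ n ≥ N, dist (u n) p < dist p q / 3 := by
    intro n hn
    induction n, hn using Int.leInduction with
    | base => exact hp
    | succ n hn ih =>
      refine (min_lt_iff.1 (hN (n + 1) (by omega)).1).resolve_right fun hq => ?_
      have := dist_triangle4 p (u n) (u (n + 1)) q
      linarith [(hN n hn).2, dist_comm p (u n), dist_comm (u n) (u (n + 1))]
  rw [tendsto_iff_dist_tendsto_zero]
  refine hnear.congr' (eventually_atTop.2 ⟨N, fun n hn => min_eq_left ?_⟩)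
  linarith [hstay n hn, dist_triangle p (u n) q, dist_comm p (u n), dist_nonneg (x := p) (y := q)]

theorem tendsto_or_tendsto_of_min_dist {α : Type*} [MetricSpace α] {u : ℤ → α} {p q : α}
    (hpq : p ≠ q) (hnear : Tendsto (fun n => min (dist (u n) p) (dist (u n) q)) atTop (𝓝 0))
    (hstep : Tendsto (fun n => dist (u (n + 1)) (u n)) atTop (𝓝 0)) :
    Tendsto u atTop (𝓝 p) ∨ Tendsto u atTop (𝓝 q) := by
  have hδ : 0 < dist p q / 3 := by have := dist_pos.2 hpq; positivity
  obtain ⟨N, hN⟩ := eventually_atTop.1 <|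
    (hnear.eventually (gt_mem_nhds hδ)).and (hstep.eventually (gt_mem_nhds hδ))
  rcases min_lt_iff.1 (hN N le_rfl).1 with h | h
  · exact .inl (tendsto_of_min_dist_lt hnear hN h)
  · simp only [min_comm (dist _ p), dist_comm p q] at hnear hN
    rw [dist_comm p q] at h
    exact .inr (tendsto_of_min_dist_lt hnear hN h)

theorem Prod.norm_mk_two_mul_add_le (u v : ℝ) : ‖(2 * u + v, u + 2 * v)‖ ≤ 3 * ‖(u, v)‖ := by
  simp only [Prod.norm_def, Real.norm_eq_abs]
  have hu := le_max_left |u| |v|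
  have hv := le_max_right |u| |v|
  refine max_le (abs_le.2 ⟨?_, ?_⟩) (abs_le.2 ⟨?_, ?_⟩) <;>
    linarith [neg_abs_le u, le_abs_self u, neg_abs_le v, le_abs_self v]

theorem Prod.norm_mk_sq_le (u v : ℝ) : ‖(u, v)‖ ^ 2 ≤ u ^ 2 + v ^ 2 := by
  rw [Prod.norm_def, Real.norm_eq_abs, Real.norm_eq_abs]
  rcases max_choice |u| |v| with h | h <;> rw [h, sq_abs] <;> nlinarith

theorem Real.cos_add_le (x : ℝ) {d : ℝ} (hd : |d| ≤ 1 / 2) :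
    cos (x + d) ≤ cos x - d * sin x + 7 / 12 * d ^ 2 := by
  have hcos : cos x * (cos d - 1) ≤ d ^ 2 / 2 := by
    nlinarith [neg_one_le_cos x, cos_le_one d, one_sub_sq_div_two_le_cos (x := d)]
  have hsin : sin x * (d - sin d) ≤ d ^ 2 / 12 := calc
    sin x * (d - sin d) ≤ |d - sin d| := by
      nlinarith [abs_sin_le_one x, abs_mul (sin x) (d - sin d), le_abs_self (sin x * (d - sin d)),
        abs_nonneg (d - sin d)]
    _ ≤ |d| ^ 3 / 6 := abs_sub_sin_le d
    _ ≤ d ^ 2 / 12 := by nlinarith [sq_abs d, abs_nonneg d]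
  rw [cos_add]
  linarith

namespace F

variable {a : ℝ}

theorem eq_add_smul (a : ℝ) (p : ℝ × ℝ) :
    F a p = p + a • (2 * sin p.1 + sin p.2, sin p.1 + 2 * sin p.2) := by
  ext <;> simp only [F, Prod.smul_mk, smul_eq_mul, Prod.fst_add, Prod.snd_add] <;> ring

theorem continuous (a : ℝ) : Continuous (F a) := by
  unfold F; fun_prop

theorem dist_le (ha : 0 ≤ a) (p : ℝ × ℝ) : dist (F a p) p ≤ 3 * a * ‖(sin p.1, sin p.2)‖ := by
  rw [dist_eq_norm, eq_add_smul, add_sub_cancel_left, norm_smul, Real.norm_of_nonneg ha,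
    mul_comm 3 a, mul_assoc]
  exact mul_le_mul_of_nonneg_left (Prod.norm_mk_two_mul_add_le _ _) ha

theorem injective (ha : 0 ≤ a) (ha' : a < 1 / 3) : Injective (F a) := by
  set K : NNReal := ⟨3 * a, by positivity⟩
  have hlip : LipschitzWith K (F a - id) := LipschitzWith.of_dist_le_mul fun p q => by
    simp only [Pi.sub_apply, eq_add_smul, id, add_sub_cancel_left, dist_eq_norm, ← smul_sub,
      norm_smul, Real.norm_of_nonneg ha, Prod.mk_sub_mk]
    calc a * ‖(2 * sin p.1 + sin p.2 - (2 * sin q.1 + sin q.2),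
            sin p.1 + 2 * sin p.2 - (sin q.1 + 2 * sin q.2))‖
        = a * ‖(2 * (sin p.1 - sin q.1) + (sin p.2 - sin q.2),
            (sin p.1 - sin q.1) + 2 * (sin p.2 - sin q.2))‖ := by ring_nf
      _ ≤ a * (3 * ‖(sin p.1 - sin q.1, sin p.2 - sin q.2)‖) :=
          mul_le_mul_of_nonneg_left (Prod.norm_mk_two_mul_add_le _ _) ha
      _ ≤ 3 * a * ‖p - q‖ := by
          rw [← mul_assoc, mul_comm a]
          refine mul_le_mul_of_nonneg_left ?_ (by positivity)
          simp only [Prod.norm_def, Real.norm_eq_abs, Prod.fst_sub, Prod.snd_sub]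
          exact max_le_max (abs_sin_sub_sin_le _ _) (abs_sin_sub_sin_le _ _)
  have hK : K < 1⁻¹ := by
    rw [inv_one, ← NNReal.coe_lt_coe, NNReal.coe_one]
    show 3 * a < 1
    linarith
  exact (AntilipschitzWith.id.add_sub_lipschitzWith hlip hK).injective

noncomputable def energy (p : ℝ × ℝ) : ℝ := cos p.1 + cos p.2

theorem continuous_energy : Continuous energy := by
  unfold energy; fun_prop

theorem abs_energy_le (p : ℝ × ℝ) : |energy p| ≤ 2 := by
  unfold energy
  exact abs_le.2 ⟨by linarith [neg_one_le_cos p.1, neg_one_le_cos p.2],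
    by linarith [cos_le_one p.1, cos_le_one p.2]⟩

theorem energy_le (ha : 0 ≤ a) (ha' : a ≤ 1 / 6) (p : ℝ × ℝ) :
    energy (F a p) + a / 8 * ‖(sin p.1, sin p.2)‖ ^ 2 ≤ energy p := by
  set s := sin p.1
  set t := sin p.2
  have hd : ∀ u v : ℝ, |u| ≤ 1 → |v| ≤ 1 → |a * (2 * u + v)| ≤ 1 / 2 := fun u v hu hv => by
    have : |2 * u + v| ≤ 3 := by
      rw [abs_le] at *
      constructor <;> linarith
    rw [abs_mul, abs_of_nonneg ha]
    nlinarith [abs_nonneg (2 * u + v)]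
  have h1 := cos_add_le p.1 (hd s t (abs_sin_le_one _) (abs_sin_le_one _))
  have h2 := cos_add_le p.2 (hd t s (abs_sin_le_one _) (abs_sin_le_one _))
  have hF : F a p = (p.1 + a * (2 * s + t), p.2 + a * (2 * t + s)) := by
    ext <;> simp only [F, s, t] <;> ring
  rw [energy, energy, hF]
  -- The first-order term is `-a (2s² + 2st + 2t²) ≤ -a (s² + t²)`; by `a ≤ 1/6` the second-order
  -- term is at most `7/12 · (a/6) · 9 (s² + t²) = 7/8 · a (s² + t²)`.
  nlinarith [Prod.norm_mk_sq_le s t, mul_nonneg ha (sq_nonneg (s + t)),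
    mul_nonneg (mul_nonneg ha ha) (sq_nonneg (s - t)),
    mul_nonneg (mul_nonneg ha (sub_nonneg.2 ha'))
      (add_nonneg (sq_nonneg (s + t)) (sq_nonneg (s - t)))]

def trap : Set (ℝ × ℝ) :=
  {p | π ≤ p.1 ∧ p.1 ≤ π + 1 ∧ 0 ≤ p.2 ∧ p.2 ≤ π ∧ 2 * (p.1 - π) ≤ p.2}

theorem isCompact_trap : IsCompact trap := by
  have hsub : trap ⊆ Icc ((π, 0) : ℝ × ℝ) (π + 1, π) := fun p hp =>
    ⟨⟨hp.1, hp.2.2.1⟩, ⟨hp.2.1, hp.2.2.2.1⟩⟩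
  refine isCompact_Icc.of_isClosed_subset ?_ hsub
  simp only [trap, ofPred_and]
  refine .inter (isClosed_le ?_ ?_) <| .inter (isClosed_le ?_ ?_) <| .inter (isClosed_le ?_ ?_) <|
    .inter (isClosed_le ?_ ?_) (isClosed_le ?_ ?_) <;> fun_prop

theorem convex_trap : Convex ℝ trap := by
  rintro p ⟨p1, p2, p3, p4, p5⟩ q ⟨q1, q2, q3, q4, q5⟩ b c hb hc hbc
  simp only [trap, mem_ofPred_eq, Prod.fst_add, Prod.snd_add, Prod.smul_fst, Prod.smul_snd,
    smul_eq_mul]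
  refine ⟨?_, ?_, ?_, ?_, ?_⟩ <;> nlinarith

theorem mem_trap_zero : ((π, 0) : ℝ × ℝ) ∈ trap := by
  simp [trap, pi_pos.le]

theorem mem_trap_pi : ((π, π) : ℝ × ℝ) ∈ trap := by
  simp [trap, pi_pos.le]

theorem map_pi_zero (a : ℝ) : F a (π, 0) = (π, 0) := by
  simp [F]

theorem map_pi_pi (a : ℝ) : F a (π, π) = (π, π) := by
  simp [F]

theorem mapsTo_trap (ha : 0 ≤ a) (ha' : a ≤ 1 / 2) : MapsTo (F a) trap trap := by
  rintro ⟨x, y⟩ ⟨h1, h2, h3, h4, h5⟩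
  set u := x - π
  have hx : x = u + π := by ring
  have hu0 : 0 ≤ u := by linarith
  have hu1 : u ≤ 1 := by linarith
  have hs0 : 0 ≤ sin u := sin_nonneg_of_nonneg_of_le_pi hu0 (by linarith [pi_gt_three])
  have hsu : sin u ≤ u := sin_le hu0
  have hsu' : u / 2 ≤ sin u := by
    nlinarith [sin_ge_sub_cube hu0, mul_nonneg hu0 (by nlinarith : (0 : ℝ) ≤ 3 - u ^ 2)]
  have ht0 : 0 ≤ sin y := sin_nonneg_of_nonneg_of_le_pi h3 h4
  have ht1 : sin y ≤ 1 := sin_le_one y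
  have htπ : sin y ≤ π - y := by rw [← sin_pi_sub]; exact sin_le (by linarith)
  simp only [trap, mem_ofPred_eq, F, hx, sin_add_pi] at *
  refine ⟨?_, ?_, ?_, ?_, ?_⟩ <;>
    nlinarith [mul_nonneg ha hs0, mul_nonneg ha ht0, mul_le_mul_of_nonneg_left hsu ha,
      mul_le_mul_of_nonneg_left hsu' ha, mul_le_mul_of_nonneg_left ht1 ha,
      mul_le_mul_of_nonneg_left htπ ha, mul_nonneg hu0 (by linarith : (0 : ℝ) ≤ 1 - 2 * a),
      mul_nonneg (by linarith : 0 ≤ π - y) (by linarith : (0 : ℝ) ≤ 1 - 2 * a)]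

theorem dist_pi_pi_pi_zero : dist ((π, π) : ℝ × ℝ) (π, 0) = π := by
  simp [Prod.dist_eq, abs_of_pos pi_pos, pi_pos.le]

theorem min_dist_le {p : ℝ × ℝ} (hp : p ∈ trap) :
    min (dist p (π, 0)) (dist p (π, π)) ≤ π / 2 * ‖(sin p.1, sin p.2)‖ := by
  obtain ⟨x, y⟩ := p
  obtain ⟨h1, h2, h3, h4, -⟩ := hp
  have jordan : ∀ {w : ℝ}, |w| ≤ π / 2 → |w| ≤ π / 2 * |sin w| := fun hw => by
    have := mul_abs_le_abs_sin hw
    have hπ := pi_pos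
    calc _ = π / 2 * (2 / π * |_|) := by field_simp
      _ ≤ _ := by gcongr
  have hx : |x - π| ≤ π / 2 * |sin x| := by
    rw [← abs_neg (sin x), ← sin_sub_pi]
    exact jordan (abs_le.2 ⟨by linarith, by linarith [pi_gt_three]⟩)
  simp only [Prod.dist_eq, Real.dist_eq, Prod.norm_def, Real.norm_eq_abs,
    mul_max_of_nonneg _ _ (by positivity : 0 ≤ π / 2)]
  rcases le_total y (π / 2) with hy | hy
  · refine min_le_of_left_le (max_le_max hx ?_)
    simpa using jordan (abs_le.2 ⟨by linarith [pi_pos], hy⟩)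
  · refine min_le_of_right_le (max_le_max hx ?_)
    rw [← abs_neg (sin y), ← sin_sub_pi]
    exact jordan (abs_le.2 ⟨by linarith, by linarith⟩)

theorem exists_orbit (ha : 0 ≤ a) (ha' : a ≤ 1 / 2) :
    ∃ X : ℤ → ℝ × ℝ, (∀ n, X (n + 1) = F a (X n)) ∧ (∀ n, X n ∈ trap) ∧ dist (X 0) (π, 0) = 1 := by
  have hmaps := mapsTo_trap ha ha'
  obtain ⟨q, hq, hq1⟩ := isCompact_trap.exists_mem_iInter_image_iterate_eq (F.continuous a)
    convex_trap.isPreconnected hmaps mem_trap_zero mem_trap_pi (map_pi_zero a) (map_pi_pi a)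
    (g := fun p => dist p (π, 0)) (continuous_id.dist continuous_const) (c := 1)
    ⟨by simp, by linarith [dist_pi_pi_pi_zero, pi_gt_three]⟩
  obtain ⟨X, hX0, hX, hXK⟩ := (isCompact_trap.surjOn_iInter_image_iterate (F.continuous a)
    hmaps).exists_int_orbit hmaps.mapsTo_iInter_image_iterate hq
  exact ⟨X, hX, fun n => by simpa using mem_iInter.1 (hXK n) 0, hX0 ▸ hq1⟩

theorem tendsto_norm_sin_orbit (ha : 0 < a) (ha' : a ≤ 1 / 6) {X : ℤ → ℝ × ℝ}
    (hX : ∀ n, X (n + 1) = F a (X n)) :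
    Tendsto (fun n => ‖(sin (X n).1, sin (X n).2)‖) cofinite (𝓝 0) := by
  have hsum : Summable fun n => a / 8 * ‖(sin (X n).1, sin (X n).2)‖ ^ 2 :=
    Int.summable_of_succ_add_le (fun n => by positivity)
      (fun n => by rw [hX]; exact energy_le ha.le ha' (X n)) fun n => abs_energy_le (X n)
  simpa [Real.sqrt_sq (norm_nonneg _)] using
    ((summable_mul_left_iff (by positivity)).1 hsum).tendsto_cofinite_zero.sqrt

theorem tendsto_or_of_mem_trap {u : ℤ → ℝ × ℝ} (hu : ∀ n, u n ∈ trap)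
    (hsin : Tendsto (fun n => ‖(sin (u n).1, sin (u n).2)‖) atTop (𝓝 0))
    (hstep : Tendsto (fun n => dist (u (n + 1)) (u n)) atTop (𝓝 0)) :
    Tendsto u atTop (𝓝 (π, 0)) ∨ Tendsto u atTop (𝓝 (π, π)) :=
  tendsto_or_tendsto_of_min_dist (by simp [pi_ne_zero.symm])
    (squeeze_zero (fun _ => le_min dist_nonneg dist_nonneg) (fun n => min_dist_le (hu n))
      (by simpa using hsin.const_mul (π / 2))) hstep

theorem energy_lt_of_tendsto (ha : 0 < a) (ha' : a ≤ 1 / 6) {X : ℤ → ℝ × ℝ}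
    (hX : ∀ n, X (n + 1) = F a (X n)) (hX0 : X 0 ∈ trap) (hne : X 0 ≠ (π, 0) ∧ X 0 ≠ (π, π))
    {z w : ℝ × ℝ} (hz : Tendsto X atTop (𝓝 z)) (hw : Tendsto X atBot (𝓝 w)) :
    energy z < energy w := by
  have hdecr : ∀ n, energy (X (n + 1)) + a / 8 * ‖(sin (X n).1, sin (X n).2)‖ ^ 2 ≤ energy (X n) :=
    fun n => by rw [hX]; exact energy_le ha.le ha' (X n)
  have hanti : Antitone (energy ∘ X) := antitone_int_of_succ_le fun n => by
    have := hdecr n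
    simp only [comp_apply]
    nlinarith [sq_nonneg ‖(sin (X n).1, sin (X n).2)‖]
  have hpos : 0 < ‖(sin (X 0).1, sin (X 0).2)‖ := by
    refine (norm_nonneg _).lt_of_ne fun h => ?_
    have := min_dist_le hX0
    rw [← h, mul_zero] at this
    rcases min_le_iff.1 this with h | h
    exacts [hne.1 (dist_le_zero.1 h), hne.2 (dist_le_zero.1 h)]
  have h1 := hanti.le_of_tendsto ((continuous_energy.tendsto z).comp hz) 1
  have h2 := hanti.ge_of_tendsto ((continuous_energy.tendsto w).comp hw) 0
  have h3 := hdecr 0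
  simp only [comp_apply, zero_add] at h1 h2 h3
  nlinarith [mul_pos ha (pow_pos hpos 2)]

theorem tendsto_of_orbit (ha : 0 < a) (ha' : a ≤ 1 / 6) {X : ℤ → ℝ × ℝ}
    (hX : ∀ n, X (n + 1) = F a (X n)) (hXK : ∀ n, X n ∈ trap)
    (hne : X 0 ≠ (π, 0) ∧ X 0 ≠ (π, π)) :
    Tendsto X atTop (𝓝 (π, π)) ∧ Tendsto X atBot (𝓝 (π, 0)) := by
  have hsin := tendsto_norm_sin_orbit ha ha' hX
  have hstep : Tendsto (fun n => dist (X (n + 1)) (X n)) cofinite (𝓝 0) :=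
    squeeze_zero (fun _ => dist_nonneg) (fun n => hX n ▸ dist_le ha.le (X n))
      (by simpa only [mul_zero] using hsin.const_mul (3 * a))
  have hback_step : Tendsto (fun n => dist (X (-(n + 1))) (X (-n))) atTop (𝓝 0) := by
    have hinj : Injective fun n : ℤ => -n - 1 := fun m n h => by simpa using h
    refine ((hstep.comp hinj.tendsto_cofinite).mono_left atTop_le_cofinite).congr fun n => ?_
    simp only [comp_apply, dist_comm (X (-(n + 1)))]
    ring_nf
  have hfwd := tendsto_or_of_mem_trap hXK (hsin.mono_left atTop_le_cofinite)
    (hstep.mono_left atTop_le_cofinite)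
  have hbwd := tendsto_or_of_mem_trap (u := fun n => X (-n)) (fun n => hXK _)
    ((hsin.comp neg_injective.tendsto_cofinite).mono_left atTop_le_cofinite) hback_step
  simp only [tendsto_comp_neg_atTop_iff] at hbwd
  rcases hfwd with hz | hz <;> rcases hbwd with hw | hw
  all_goals first
    | exact ⟨hz, hw⟩
    | have := energy_lt_of_tendsto ha ha' hX (hXK 0) hne hz hw; norm_num [energy] at this

end F

theorem stmt_18 (a : ℝ) (ha : 0 < a) (ha' : a < 1/6) :
    ∃ X : ℤ → ℝ × ℝ,
      (∀ n : ℤ, X (n + 1) = F a (X n)) ∧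
      (∀ n : ℤ, X n ≠ ((Real.pi, 0) : ℝ × ℝ) ∧ X n ≠ ((Real.pi, Real.pi) : ℝ × ℝ)) ∧
      Filter.Tendsto X Filter.atTop (nhds ((Real.pi, Real.pi) : ℝ × ℝ)) ∧
      Filter.Tendsto X Filter.atBot (nhds ((Real.pi, 0) : ℝ × ℝ)) := by
  obtain ⟨X, hX, hXK, hX0⟩ := F.exists_orbit ha.le (by linarith)
  have hne : X 0 ≠ (π, 0) ∧ X 0 ≠ (π, π) := by
    constructor <;> rintro h <;> rw [h] at hX0
    · norm_num at hX0
    · linarith [F.dist_pi_pi_pi_zero, pi_gt_three]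
  have hinj := F.injective ha.le (by linarith)
  refine ⟨X, hX, fun n => ⟨fun h => hne.1 ?_, fun h => hne.2 ?_⟩,
    F.tendsto_of_orbit ha ha'.le hX hXK hne⟩
  · exact eq_of_int_orbit_of_injective hinj hX (F.map_pi_zero a) h 0
  · exact eq_of_int_orbit_of_injective hinj hX (F.map_pi_pi a) h 0
end

section
/- The square s₂ is positively invariant under F (F(s₂) ⊆ s₂), and every point in the interior of s₂ lies in the basin of attraction of the fixed point (π,π): for every (x,y) in the interior of s₂, the iterates Fⁿ(x,y) converge to (π,π) as n → ∞. -/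
/-!
In the coordinates `u = x + y`, `v = x - y` the square `s2` is `[π, 2π] × [0, π]`, and `F`
moves `u` by `3a (sin x + sin y)` and `v` by `-a (sin y - sin x)`. On `s2` both sine
combinations are nonnegative and bounded by the distance of `u` to `2π`, resp. of `v` to `0`,
which gives invariance as soon as `3a ≤ 1`. Along an orbit the coordinate `y` then increases by
at least `a sin y`, so it converges to a zero of `sin` in `(0, π]`, namely `π`, and `x` is
squeezed between `y` and `2π - y`.
-/

open Real Filter Topology Set

lemma sin_add_sin_nonneg {x y : ℝ} (hs₀ : 0 ≤ x + y) (hs₁ : x + y ≤ 2 * π)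
    (hd₀ : -π ≤ x - y) (hd₁ : x - y ≤ π) : 0 ≤ sin x + sin y := by
  rw [sin_add_sin]
  have hsin : 0 ≤ sin ((x + y) / 2) := sin_nonneg_of_nonneg_of_le_pi (by linarith) (by linarith)
  have hcos : 0 ≤ cos ((x - y) / 2) := cos_nonneg_of_mem_Icc ⟨by linarith, by linarith⟩
  positivity

lemma sin_add_sin_le {x y : ℝ} (h : x + y ≤ 2 * π) : sin x + sin y ≤ 2 * π - (x + y) := by
  have h2π : sin x + sin y = sin x - sin (2 * π - y) := by rw [sin_two_pi_sub]; ring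
  calc sin x + sin y ≤ |x - (2 * π - y)| := h2π ▸ (le_abs_self _).trans (abs_sin_sub_sin_le _ _)
    _ = 2 * π - (x + y) := by rw [abs_of_nonpos (by linarith)]; ring

lemma sin_le_sin_of_pi_le_add {x y : ℝ} (hs₀ : π ≤ x + y) (hs₁ : x + y ≤ 3 * π)
    (hd₀ : 0 ≤ x - y) (hd₁ : x - y ≤ 2 * π) : sin x ≤ sin y := by
  have hsin : 0 ≤ sin ((x - y) / 2) := sin_nonneg_of_nonneg_of_le_pi (by linarith) (by linarith)
  have hcos : cos ((x + y) / 2) ≤ 0 := cos_nonpos_of_pi_div_two_le_of_le (by linarith) (by linarith)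
  have := sin_sub_sin x y
  nlinarith [mul_nonpos_of_nonneg_of_nonpos hsin hcos]

lemma snd_mem_Icc_of_mem_s2 {p : ℝ × ℝ} (hp : p ∈ s2) : p.2 ∈ Icc 0 π := by
  obtain ⟨⟨h₁, h₂⟩, h₃, h₄⟩ := hp
  constructor <;> linarith

lemma mem_Icc_fst_of_mem_s2 {p : ℝ × ℝ} (hp : p ∈ s2) : p.1 ∈ Icc p.2 (2 * π - p.2) := by
  obtain ⟨⟨h₁, h₂⟩, h₃, h₄⟩ := hp
  constructor <;> linarith

lemma mapsTo_F_s2 {a : ℝ} (ha₀ : 0 ≤ a) (ha₁ : a ≤ 1 / 3) : MapsTo (F a) s2 s2 := by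
  rintro ⟨x, y⟩ ⟨⟨h₁, h₂⟩, h₃, h₄⟩
  dsimp only at h₁ h₂ h₃ h₄
  have hS₀ := sin_add_sin_nonneg (x := x) (y := y) (by linarith) (by linarith) (by linarith)
    (by linarith)
  have hS₁ := sin_add_sin_le (x := x) (y := y) (by linarith)
  have hD₀ := sin_le_sin_of_pi_le_add (x := x) (y := y) (by linarith) (by linarith) (by linarith)
    (by linarith)
  have hD₁ : sin y - sin x ≤ x - y :=
    (le_abs_self _).trans ((abs_sin_sub_sin_le y x).trans (by rw [abs_of_nonpos] <;> linarith))
  simp only [F, s2, mem_ofPred_eq]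
  refine ⟨⟨?_, ?_⟩, ?_, ?_⟩
  · nlinarith [mul_nonneg ha₀ (sub_nonneg.2 hD₀)]
  · nlinarith [mul_nonneg ha₀ (sub_nonneg.2 hD₀)]
  · nlinarith [mul_nonneg ha₀ hS₀]
  · nlinarith [mul_le_mul_of_nonneg_left hS₁ ha₀, mul_nonneg ha₀ hS₀]

lemma add_mul_sin_snd_le_snd_F {a : ℝ} (ha : 0 ≤ a) {p : ℝ × ℝ} (hp : p ∈ s2) :
    p.2 + a * sin p.2 ≤ (F a p).2 := by
  obtain ⟨⟨h₁, h₂⟩, h₃, h₄⟩ := hp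
  have hS := sin_add_sin_nonneg (x := p.1) (y := p.2) (by linarith) (by linarith) (by linarith)
    (by linarith)
  simp only [F]
  nlinarith [mul_nonneg ha hS]

lemma snd_pos_of_mem_interior_s2 {p : ℝ × ℝ} (hp : p ∈ interior s2) : 0 < p.2 := by
  have hsub : s2 ⊆ univ ×ˢ Ici 0 := fun q hq => ⟨trivial, (snd_mem_Icc_of_mem_s2 hq).1⟩
  have := interior_mono hsub hp
  rw [interior_prod_eq, interior_univ, interior_Ici] at this
  exact this.2

lemma tendsto_pi_of_add_mul_sin_le {a : ℝ} (ha : 0 < a) {y : ℕ → ℝ} (h0 : 0 < y 0)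
    (hmem : ∀ n, y n ∈ Icc 0 π) (hstep : ∀ n, y n + a * sin (y n) ≤ y (n + 1)) :
    Tendsto y atTop (𝓝 π) := by
  have hmono : Monotone y := monotone_nat_of_le_succ fun n => by
    have := mul_nonneg ha.le (sin_nonneg_of_nonneg_of_le_pi (hmem n).1 (hmem n).2)
    linarith [hstep n]
  have hbdd : BddAbove (range y) := ⟨π, by rintro _ ⟨n, rfl⟩; exact (hmem n).2⟩
  have hlim := tendsto_atTop_ciSup hmono hbdd
  set L := ⨆ n, y n
  have hL₀ : 0 < L := h0.trans_le (le_ciSup hbdd 0)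
  have hLπ : L ≤ π := ciSup_le fun n => (hmem n).2
  have hstepL : L + a * sin L ≤ L :=
    le_of_tendsto_of_tendsto' (hlim.add (((continuous_sin.tendsto L).comp hlim).const_mul a))
      (hlim.comp (tendsto_add_atTop_nat 1)) hstep
  have hLeq : L = π := hLπ.eq_or_lt.resolve_right fun hlt => by
    nlinarith [sin_pos_of_pos_of_lt_pi hL₀ hlt]
  exact hLeq ▸ hlim

lemma tendsto_pi_pi_of_tendsto_snd {q : ℕ → ℝ × ℝ} (hq : ∀ n, q n ∈ s2)
    (hy : Tendsto (fun n => (q n).2) atTop (𝓝 π)) : Tendsto q atTop (𝓝 (π, π)) := by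
  have hupper : Tendsto (fun n => 2 * π - (q n).2) atTop (𝓝 π) := by
    simpa [two_mul] using hy.const_sub (2 * π)
  have hx : Tendsto (fun n => (q n).1) atTop (𝓝 π) :=
    tendsto_of_tendsto_of_tendsto_of_le_of_le hy hupper (fun n => (mem_Icc_fst_of_mem_s2 (hq n)).1)
      fun n => (mem_Icc_fst_of_mem_s2 (hq n)).2
  exact hx.prodMk_nhds hy

theorem stmt_19 (a : ℝ) (ha : 0 < a) (ha' : a < 1/6) :
    F a '' s2 ⊆ s2 ∧
    ∀ p ∈ interior s2,
      Filter.Tendsto (fun n => (F a)^[n] p) Filter.atTop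
        (nhds ((Real.pi, Real.pi) : ℝ × ℝ)) := by
  have hmaps : MapsTo (F a) s2 s2 := mapsTo_F_s2 ha.le (by linarith)
  refine ⟨hmaps.image_subset, fun p hp => ?_⟩
  have horbit : ∀ n, (F a)^[n] p ∈ s2 := fun n => hmaps.iterate n (interior_subset hp)
  refine tendsto_pi_pi_of_tendsto_snd horbit
    (tendsto_pi_of_add_mul_sin_le ha (snd_pos_of_mem_interior_s2 hp)
      (fun n => snd_mem_Icc_of_mem_s2 (horbit n)) fun n => ?_)
  rw [Function.iterate_succ_apply']
  exact add_mul_sin_snd_le_snd_F ha.le (horbit n)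
end
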